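/- Let G be a finite simple graph with graph (hop) distance dist, let u, v be vertices in the same connected component, and let C be a clique of G such that some shortest u–v path contains a vertex of C. Define d* = min_{x∈C} dist(u, x) + min_{y∈C} dist(y, v). Then d* ≤ dist(u, v) ≤ d* + 1. -/
import Mathlib


theorem stmt_12 {V : Type*} (G : SimpleGraph V) (u v : V)
    (C : Finset V) (hC : C.Nonempty) (hclique : G.IsClique ↑C)
    (hpath : ∃ p : G.Walk u v, p.length = G.dist u v ∧ ∃ x ∈ C, x ∈ p.support) :
    C.inf' hC (fun x => G.dist u x) + C.inf' hC (fun y => G.dist y v) ≤ G.dist u v ∧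
    G.dist u v ≤ C.inf' hC (fun x => G.dist u x) + C.inf' hC (fun y => G.dist y v) + 1 := by
  classical
  obtain ⟨p, hp, x, hxC, hxp⟩ := hpath
  have hux : G.Reachable u x := ⟨p.takeUntil x hxp⟩
  have hxv : G.Reachable x v := ⟨p.dropUntil x hxp⟩
  have hreachu : ∀ y ∈ C, G.Reachable u y := by
    intro y hy
    rcases eq_or_ne y x with rfl | hne
    · exact hux
    · exact hux.trans ⟨(hclique hxC hy hne.symm).toWalk⟩
  have hreachv : ∀ y ∈ C, G.Reachable y v := by
    intro y hy
    rcases eq_or_ne y x with rfl | hne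
    · exact hxv
    · exact (SimpleGraph.Adj.reachable (hclique hy hxC hne)).trans hxv
  constructor
  · have h1 : G.dist u x ≤ (p.takeUntil x hxp).length := SimpleGraph.dist_le _
    have h2 : G.dist x v ≤ (p.dropUntil x hxp).length := SimpleGraph.dist_le _
    have h3 : (p.takeUntil x hxp).length + (p.dropUntil x hxp).length = p.length := by
      rw [← SimpleGraph.Walk.length_append, SimpleGraph.Walk.take_spec]
    have hA := Finset.inf'_le (fun x => G.dist u x) hxC
    have hB := Finset.inf'_le (fun y => G.dist y v) hxC
    omega
  · obtain ⟨x0, hx0, hx0e⟩ := Finset.exists_mem_eq_inf' hC (fun x => G.dist u x)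
    obtain ⟨y0, hy0, hy0e⟩ := Finset.exists_mem_eq_inf' hC (fun y => G.dist y v)
    obtain ⟨q1, hq1⟩ := (hreachu x0 hx0).exists_walk_length_eq_dist
    obtain ⟨q2, hq2⟩ := (hreachv y0 hy0).exists_walk_length_eq_dist
    rw [hx0e, hy0e]
    rcases eq_or_ne x0 y0 with rfl | hne
    · have := SimpleGraph.dist_le (q1.append q2)
      rw [SimpleGraph.Walk.length_append] at this
      omega
    · have hadj : G.Adj x0 y0 := hclique hx0 hy0 hne
      have := SimpleGraph.dist_le (q1.append (SimpleGraph.Walk.cons hadj q2))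
      rw [SimpleGraph.Walk.length_append, SimpleGraph.Walk.length_cons] at this
      omega
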